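/- arXiv:math/0409398 — 4 statements merged into one kernel-verified Lean document; each statement's English description precedes it below -/
import Mathlib

section
/- Every m×n Latin rectangle on n symbols with m ≤ n/4 has an orthogonal mate. That is, if J is an m×n Latin rectangle with m ≤ n/4, there exists an m×n Latin rectangle L on the same n symbols such that the pairs (J(i,k), L(i,k)) over all cells (i,k) are pairwise distinct. -/
/-- An `m × n` Latin rectangle on `n` symbols: each symbol occurs exactly once
in each row (rows are bijections) and at most once in each column. -/
def IsLatinRect (m n : ℕ) (L : Fin m → Fin n → Fin n) : Prop :=
  (∀ i : Fin m, Function.Bijective (L i)) ∧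
  (∀ k : Fin n, Function.Injective (fun i : Fin m => L i k))

/-!
The mate is built one row at a time. Once `r` rows are placed, the next row must avoid `2r`
permutations of the columns: agreeing with an earlier row in some column repeats a symbol there,
and agreeing with `k ↦ L i ((J i)⁻¹ (J r k))` repeats a pair of row `i`. Each column then forbids
at most `2r` symbols and each symbol is forbidden in at most `2r` columns, so Hall's condition
holds as long as `4r ≤ n`: a small set of columns sees at least `n - 2r` allowed symbols from any
one of them, and a set of more than `2r` columns leaves no symbol forbidden throughout.
-/

open Finset Equiv

variable {α β ι : Type*}

theorem exists_perm_forall_apply_notMem [Fintype α] [DecidableEq α] (F : α → Finset α)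
    (d : ℕ) (hd : 2 * d ≤ Fintype.card α) (hrow : ∀ a, #(F a) ≤ d)
    (hcol : ∀ b, #{a | b ∈ F a} ≤ d) :
    ∃ σ : Perm α, ∀ a, σ a ∉ F a := by
  have hall : ∀ A : Finset α, #A ≤ #(A.biUnion fun a => (F a)ᶜ) := by
    intro A
    by_cases hA : #A ≤ Fintype.card α - d
    · obtain rfl | ⟨a, ha⟩ := A.eq_empty_or_nonempty
      · simp
      calc #A ≤ #(F a)ᶜ := by rw [card_compl]; have := hrow a; omega
        _ ≤ _ := card_le_card (subset_biUnion_of_mem (fun a => (F a)ᶜ) ha)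
    · suffices A.biUnion (fun a => (F a)ᶜ) = univ by rw [this]; exact card_le_univ A
      refine eq_univ_of_forall fun b => ?_
      by_contra hb
      have hA_sub : A ⊆ ({a | b ∈ F a} : Finset α) := fun a ha => by
        simp only [mem_biUnion, mem_compl, not_exists, not_and, not_not] at hb
        simpa using hb a ha
      have := card_le_card hA_sub
      have := hcol b
      omega
  obtain ⟨f, hf, hfF⟩ := (all_card_le_biUnion_card_iff_existsInjective' _).1 hall
  exact ⟨ofBijective f hf.bijective_of_finite, fun a => by simpa using hfF a⟩

theorem exists_perm_forall_apply_ne [Fintype α] [DecidableEq α] (P : Finset (Perm α))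
    (hP : 2 * #P ≤ Fintype.card α) :
    ∃ σ : Perm α, ∀ τ ∈ P, ∀ a, σ a ≠ τ a := by
  obtain ⟨σ, hσ⟩ := exists_perm_forall_apply_notMem (fun a => P.image (· a)) #P hP
    (fun a => card_image_le) fun b => by
      calc #{a | b ∈ P.image (· a)} ≤ #(P.image fun τ => τ.symm b) := by
            refine card_le_card fun a ha => ?_
            simp only [mem_filter, mem_image] at ha ⊢
            obtain ⟨-, τ, hτ, rfl⟩ := ha
            exact ⟨τ, hτ, τ.symm_apply_apply a⟩
        _ ≤ #P := card_image_le
  exact ⟨σ, fun τ hτ a h => hσ a (mem_image.2 ⟨τ, hτ, h.symm⟩)⟩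

/-- Reading `L i ∘ (J i)⁻¹` as the map sending a symbol of `J` to the symbol of `L` paired with
it in row `i`, orthogonality between two rows says that these maps never agree. -/
def CompatibleRows (J : ι → α ≃ β) (L : ι → Perm α) (i j : ι) : Prop :=
  (∀ k, L i k ≠ L j k) ∧ ∀ b, L i ((J i).symm b) ≠ L j ((J j).symm b)

theorem CompatibleRows.symm {J : ι → α ≃ β} {L : ι → Perm α} {i j : ι}
    (h : CompatibleRows J L i j) : CompatibleRows J L j i :=
  ⟨fun k => (h.1 k).symm, fun b => (h.2 b).symm⟩

theorem exists_pairwise_compatibleRows [Fintype α] [DecidableEq α] [DecidableEq ι]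
    (J : ι → α ≃ β) (S : Finset ι) (hS : 4 * #S ≤ Fintype.card α + 4) :
    ∃ L : ι → Perm α, (S : Set ι).Pairwise (CompatibleRows J L) := by
  induction S using Finset.induction_on with
  | empty => exact ⟨fun _ => 1, by simp⟩
  | insert r S hr ih =>
    rw [card_insert_of_notMem hr] at hS
    obtain ⟨L, hL⟩ := ih (by omega)
    set P := S.biUnion fun i => {L i, (J r).trans ((J i).symm.trans (L i))}
    have hP : #P ≤ #S * 2 := card_biUnion_le_card_mul _ _ _ fun _ _ => card_le_two
    obtain ⟨σ, hσ⟩ := exists_perm_forall_apply_ne P (by omega)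
    have hσ_ne {i} (hi : i ∈ S) : CompatibleRows J (Function.update L r σ) r i := by
      have hir : i ≠ r := ne_of_mem_of_not_mem hi hr
      simp only [CompatibleRows, Function.update_self, Function.update_of_ne hir]
      refine ⟨hσ _ (mem_biUnion.2 ⟨i, hi, by simp⟩), fun b => ?_⟩
      simpa using hσ ((J r).trans ((J i).symm.trans (L i))) (mem_biUnion.2 ⟨i, hi, by simp⟩)
        ((J r).symm b)
    refine ⟨Function.update L r σ, ?_⟩
    rw [coe_insert]
    refine Set.Pairwise.insert_of_notMem hr (fun i hi j hj hij => ?_)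
      fun i hi => ⟨hσ_ne hi, (hσ_ne hi).symm⟩
    have hir : i ≠ r := ne_of_mem_of_not_mem hi hr
    have hjr : j ≠ r := ne_of_mem_of_not_mem hj hr
    simpa only [CompatibleRows, Function.update_of_ne hir, Function.update_of_ne hjr]
      using hL hi hj hij

theorem Pairwise.injective_apply_of_compatibleRows {J : ι → α ≃ β} {L : ι → Perm α}
    (h : Pairwise (CompatibleRows J L)) (k : α) : Function.Injective fun i => L i k := by
  intro i j hij
  by_contra hne
  exact (h hne).1 k hij

theorem Pairwise.injective_pair_of_compatibleRows {J : ι → α ≃ β} {L : ι → Perm α}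
    (h : Pairwise (CompatibleRows J L)) :
    Function.Injective fun p : ι × α => (J p.1 p.2, L p.1 p.2) := by
  rintro ⟨i, k⟩ ⟨j, k'⟩ hp
  simp only [Prod.mk.injEq] at hp
  obtain ⟨hJ, hL⟩ := hp
  obtain rfl | hij := eq_or_ne i j
  · rw [(J i).injective hJ]
  · refine absurd ?_ ((h hij).2 (J i k))
    rwa [symm_apply_apply, hJ, symm_apply_apply]

/-- Every `m × n` Latin rectangle with `m ≤ n/4` has an orthogonal mate. -/
theorem latin_rectangle_orthogonal_mate_of_quarter (m n : ℕ) (hm : 4 * m ≤ n)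
    (J : Fin m → Fin n → Fin n) (hJ : IsLatinRect m n J) :
    ∃ L : Fin m → Fin n → Fin n, IsLatinRect m n L ∧
      Function.Injective (fun p : Fin m × Fin n => (J p.1 p.2, L p.1 p.2)) := by
  let J' : Fin m → Perm (Fin n) := fun i => ofBijective (J i) (hJ.1 i)
  obtain ⟨L, hL⟩ := exists_pairwise_compatibleRows J' univ
    (by simp only [card_univ, Fintype.card_fin]; omega)
  rw [coe_univ, Set.pairwise_univ] at hL
  exact ⟨fun i => L i, ⟨fun i => (L i).bijective, hL.injective_apply_of_compatibleRows⟩,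
    hL.injective_pair_of_compatibleRows⟩
end

section
/- Let n ≥ 1 and let p : K × S → ℝ≥0 with |K| = |S| = n. Suppose there is η ≥ 0 such that for all nonempty proper subsets A ⊊ S and B ⊊ K one has 2n − |A| − |B| + (1+η)·∑_{γ∈A, k∈B} p(k,γ) ≥ n, and that each row sum ∑_k (1+η)p(k,γ) ≥ 1 and each column sum ∑_γ (1+η)p(k,γ) ≥ 1. Then there exists a doubly stochastic matrix q : K × S → ℝ≥0 (all row and column sums equal 1) with q(k,γ) ≤ (1+η)·p(k,γ) for all (k,γ). -/
open Finset

open Finset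

/-- Residual reachability in the bipartite flow network: a column `γ` is reachable if it
is deficient or can receive flow back from a reachable row; a row `k` is reachable if some
reachable column has residual capacity to it. -/
inductive MFReach (n : ℕ) (c q : Fin n → Fin n → ℝ) : (Fin n ⊕ Fin n) → Prop
  | base (γ : Fin n) (h : ∑ k, q k γ < 1) : MFReach n c q (.inl γ)
  | fwd (γ k : Fin n) (hγ : MFReach n c q (.inl γ)) (h : q k γ < c k γ) :
      MFReach n c q (.inr k)
  | bwd (k γ : Fin n) (hk : MFReach n c q (.inr k)) (h : 0 < q k γ) :
      MFReach n c q (.inl γ)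

lemma MFReach.augment {n : ℕ} {c q : Fin n → Fin n → ℝ}
    (hq0 : ∀ i j, 0 ≤ q i j) (hqc : ∀ i j, q i j ≤ c i j) :
    ∀ x, MFReach n c q x → ∃ δ C γ0, 0 < δ ∧ 0 ≤ C ∧ (∑ k, q k γ0) + δ ≤ 1 ∧
      ∀ ε : ℝ, 0 < ε → ε ≤ δ → ∃ q' : Fin n → Fin n → ℝ,
        (∀ i j, 0 ≤ q' i j ∧ q' i j ≤ c i j ∧ |q' i j - q i j| ≤ C * ε) ∧
        (∀ γ', ∑ k, q' k γ' = ∑ k, q k γ' + (if γ' = γ0 then ε else 0)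
            - Sum.elim (fun γ => if γ' = γ then ε else 0) (fun _ => 0) x) ∧
        (∀ k', ∑ γ', q' k' γ' = ∑ γ', q k' γ'
            + Sum.elim (fun _ => 0) (fun k => if k' = k then ε else 0) x) := by
  intro x hx
  induction hx with
  | base γ h =>
      refine ⟨1 - ∑ k, q k γ, 0, γ, by linarith, le_refl 0, by linarith, ?_⟩
      intro ε hε hεδ
      refine ⟨q, fun i j => ⟨hq0 i j, hqc i j, by simp⟩, ?_, ?_⟩
      · intro γ'; by_cases hγ' : γ' = γ <;> simp [hγ']
      · intro k'; simp
  | fwd γ k hγ h ih =>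
      obtain ⟨δ, C, γ0, hδ, hC, hγ0, H⟩ := ih
      have hCpos : (0:ℝ) < C + 1 := by linarith
      refine ⟨min δ ((c k γ - q k γ) / (C + 1)), C + 1, γ0,
        lt_min hδ (div_pos (by linarith) hCpos), by linarith,
        le_trans (by simp [min_le_left]) hγ0, ?_⟩
      intro ε hε hεδ
      have hεδ' : ε ≤ δ := le_trans hεδ (min_le_left _ _)
      have hεc : (C + 1) * ε ≤ c k γ - q k γ := by
        have := le_trans hεδ (min_le_right _ _)
        calc (C + 1) * ε ≤ (C + 1) * ((c k γ - q k γ) / (C + 1)) := by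
              apply mul_le_mul_of_nonneg_left this (by linarith)
          _ = c k γ - q k γ := by field_simp
      obtain ⟨q', hb, hr, hcsum⟩ := H ε hε hεδ'
      refine ⟨fun i j => q' i j + if i = k ∧ j = γ then ε else 0, ?_, ?_, ?_⟩
      · intro i j
        obtain ⟨h0, h1, h2⟩ := hb i j
        have habs := abs_le.mp h2
        by_cases hij : i = k ∧ j = γ
        · have hc' : (C + 1) * ε ≤ c i j - q i j := by rw [hij.1, hij.2]; exact hεc
          simp only [if_pos hij]
          refine ⟨by linarith, by linarith [habs.2], ?_⟩
          rw [abs_le]; constructor <;> [linarith [habs.1]; linarith [habs.2]]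
        · simp only [if_neg hij, add_zero]
          refine ⟨h0, h1, ?_⟩
          rw [abs_le]; constructor <;> [linarith [habs.1]; nlinarith [habs.2]]
      · intro γ'
        have : ∑ k', (if k' = k ∧ γ' = γ then ε else 0) = if γ' = γ then ε else 0 := by
          by_cases hγ' : γ' = γ <;> simp [hγ']
        rw [Finset.sum_add_distrib, this, hr γ']
        simp only [Sum.elim_inl, Sum.elim_inr]
        ring
      · intro k'
        have : ∑ γ', (if k' = k ∧ γ' = γ then ε else 0) = if k' = k then ε else 0 := by
          by_cases hk' : k' = k <;> simp [hk']
        rw [Finset.sum_add_distrib, this, hcsum k']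
        simp only [Sum.elim_inl, Sum.elim_inr]
        ring
  | bwd k γ hk h ih =>
      obtain ⟨δ, C, γ0, hδ, hC, hγ0, H⟩ := ih
      have hCpos : (0:ℝ) < C + 1 := by linarith
      refine ⟨min δ (q k γ / (C + 1)), C + 1, γ0,
        lt_min hδ (div_pos h hCpos), by linarith,
        le_trans (by simp [min_le_left]) hγ0, ?_⟩
      intro ε hε hεδ
      have hεδ' : ε ≤ δ := le_trans hεδ (min_le_left _ _)
      have hεc : (C + 1) * ε ≤ q k γ := by
        have := le_trans hεδ (min_le_right _ _)
        calc (C + 1) * ε ≤ (C + 1) * (q k γ / (C + 1)) := by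
              apply mul_le_mul_of_nonneg_left this (by linarith)
          _ = q k γ := by field_simp
      obtain ⟨q', hb, hr, hcsum⟩ := H ε hε hεδ'
      refine ⟨fun i j => q' i j - if i = k ∧ j = γ then ε else 0, ?_, ?_, ?_⟩
      · intro i j
        obtain ⟨h0, h1, h2⟩ := hb i j
        have habs := abs_le.mp h2
        by_cases hij : i = k ∧ j = γ
        · have hc' : (C + 1) * ε ≤ q i j := by rw [hij.1, hij.2]; exact hεc
          simp only [if_pos hij]
          refine ⟨by linarith [habs.1], by linarith, ?_⟩
          rw [abs_le]; constructor <;> [linarith [habs.1]; linarith [habs.2]]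
        · simp only [if_neg hij, sub_zero]
          refine ⟨h0, h1, ?_⟩
          rw [abs_le]; constructor <;> [linarith [habs.1]; nlinarith [habs.2]]
      · intro γ'
        have : ∑ k', (if k' = k ∧ γ' = γ then ε else 0) = if γ' = γ then ε else 0 := by
          by_cases hγ' : γ' = γ <;> simp [hγ']
        rw [Finset.sum_sub_distrib, this, hr γ']
        simp only [Sum.elim_inl, Sum.elim_inr]
        ring
      · intro k'
        have : ∑ γ', (if k' = k ∧ γ' = γ then ε else 0) = if k' = k then ε else 0 := by
          by_cases hk' : k' = k <;> simp [hk']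
        rw [Finset.sum_sub_distrib, this, hcsum k']
        simp only [Sum.elim_inl, Sum.elim_inr]
        ring

/-- Ford–Fulkerson cut condition gives a doubly stochastic matrix dominated by
the capacities `(1+η)·p`. -/
theorem dominated_fractional_matching_of_cut_condition (n : ℕ) (hn : 1 ≤ n)
    (η : ℝ) (hη : 0 ≤ η)
    (p : Fin n → Fin n → ℝ) (hp : ∀ k γ, 0 ≤ p k γ)
    (hcut : ∀ A B : Finset (Fin n), A.Nonempty → A ≠ Finset.univ →
      B.Nonempty → B ≠ Finset.univ →
      (n : ℝ) ≤ 2 * n - A.card - B.card + (1 + η) * ∑ γ ∈ A, ∑ k ∈ B, p k γ)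
    (hrow : ∀ γ : Fin n, 1 ≤ ∑ k, (1 + η) * p k γ)
    (hcol : ∀ k : Fin n, 1 ≤ ∑ γ, (1 + η) * p k γ) :
    ∃ q : Fin n → Fin n → ℝ, (∀ k γ, 0 ≤ q k γ) ∧
      (∀ γ : Fin n, ∑ k, q k γ = 1) ∧ (∀ k : Fin n, ∑ γ, q k γ = 1) ∧
      (∀ k γ, q k γ ≤ (1 + η) * p k γ) := by
  classical
  set c : Fin n → Fin n → ℝ := fun k γ => (1 + η) * p k γ with hcdef
  have hc0 : ∀ k γ, 0 ≤ c k γ := fun k γ => mul_nonneg (by linarith) (hp k γ)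
  set F : Set (Fin n → Fin n → ℝ) := {f | (∀ i j, 0 ≤ f i j ∧ f i j ≤ c i j) ∧
    (∀ γ, ∑ k, f k γ ≤ 1) ∧ (∀ k, ∑ γ, f k γ ≤ 1)} with hFdef
  have hcont : ∀ i j, Continuous fun f : Fin n → Fin n → ℝ => f i j :=
    fun i j => (continuous_apply j).comp (continuous_apply i)
  have hFclosed : IsClosed F := by
    have : F = (⋂ i, ⋂ j, ({f : Fin n → Fin n → ℝ | 0 ≤ f i j} ∩ {f | f i j ≤ c i j})) ∩
        ((⋂ γ, {f : Fin n → Fin n → ℝ | ∑ k, f k γ ≤ 1}) ∩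
          ⋂ k, {f : Fin n → Fin n → ℝ | ∑ γ, f k γ ≤ 1}) := by
      ext f
      simp only [hFdef, Set.mem_setOf_eq, Set.mem_inter_iff, Set.mem_iInter, forall_and]
    rw [this]
    refine IsClosed.inter (isClosed_iInter fun i => isClosed_iInter fun j =>
      IsClosed.inter (isClosed_le continuous_const (hcont i j))
        (isClosed_le (hcont i j) continuous_const)) (IsClosed.inter ?_ ?_)
    · exact isClosed_iInter fun γ => isClosed_le
        (continuous_finset_sum _ fun k _ => hcont k γ) continuous_const
    · exact isClosed_iInter fun k => isClosed_le
        (continuous_finset_sum _ fun γ _ => hcont k γ) continuous_const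
  have hFcompact : IsCompact F := by
    refine IsCompact.of_isClosed_subset (isCompact_univ_pi fun i =>
      isCompact_univ_pi fun j => isCompact_Icc (a := (0:ℝ)) (b := c i j)) hFclosed ?_
    intro f hf
    rw [Set.mem_univ_pi]
    intro i
    rw [Set.mem_univ_pi]
    intro j
    exact ⟨(hf.1 i j).1, (hf.1 i j).2⟩
  have hFne : F.Nonempty := by
    refine ⟨0, fun i j => ⟨le_refl 0, hc0 i j⟩, ?_, ?_⟩ <;> intro x <;> simp
  obtain ⟨q, hqF, hqmax⟩ := hFcompact.exists_isMaxOn hFne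
    (Continuous.continuousOn (continuous_finset_sum _ fun γ _ =>
      continuous_finset_sum _ fun k _ => hcont k γ) (f := fun f => ∑ γ, ∑ k, f k γ))
  -- Key claim: the total mass of the maximizer is at least n.
  have key : (n : ℝ) ≤ ∑ γ, ∑ k, q k γ := by
    by_contra hlt
    push_neg at hlt
    -- there is a deficient column
    obtain ⟨γd, hγd⟩ : ∃ γd, ∑ k, q k γd < 1 := by
      by_contra hno
      push_neg at hno
      have : (n : ℝ) ≤ ∑ γ, ∑ k, q k γ := by
        calc (n : ℝ) = ∑ _γ : Fin n, (1:ℝ) := by simp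
          _ ≤ _ := Finset.sum_le_sum fun γ _ => hno γ
      linarith
    by_cases hA : ∃ k, MFReach n c q (.inr k) ∧ ∑ γ, q k γ < 1
    · -- augmenting path: contradict maximality
      obtain ⟨k, hk, hkdef⟩ := hA
      obtain ⟨δ, C, γ0, hδ, hC, hγ0, H⟩ :=
        MFReach.augment (fun i j => (hqF.1 i j).1) (fun i j => (hqF.1 i j).2) _ hk
      set ε := min δ (1 - ∑ γ, q k γ) with hεdef
      have hε : 0 < ε := lt_min hδ (by linarith)
      obtain ⟨q', hb, hr, hcs⟩ := H ε hε (min_le_left _ _)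
      have hq'F : q' ∈ F := by
        refine ⟨fun i j => ⟨(hb i j).1, (hb i j).2.1⟩, ?_, ?_⟩
        · intro γ'
          rw [hr γ']
          simp only [Sum.elim_inr, sub_zero]
          by_cases hγ' : γ' = γ0
          · rw [if_pos hγ', hγ']
            have hεδ : ε ≤ δ := min_le_left _ _
            linarith
          · rw [if_neg hγ', add_zero]
            exact hqF.2.1 γ'
        · intro k'
          rw [hcs k']
          simp only [Sum.elim_inr]
          by_cases hk' : k' = k
          · rw [if_pos hk', hk']
            have : ε ≤ 1 - ∑ γ, q k γ := min_le_right _ _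
            linarith
          · rw [if_neg hk', add_zero]
            exact hqF.2.2 k'
      have htot : ∑ γ', ∑ k', q' k' γ' = (∑ γ', ∑ k', q k' γ') + ε := by
        calc ∑ γ', ∑ k', q' k' γ'
            = ∑ γ', (∑ k', q k' γ' + (if γ' = γ0 then ε else 0)) := by
              refine Finset.sum_congr rfl fun γ' _ => ?_
              rw [hr γ']
              simp
          _ = (∑ γ', ∑ k', q k' γ') + ε := by
              rw [Finset.sum_add_distrib, Finset.sum_ite_eq' univ γ0 (fun _ => ε)]
              simp
      have hle := isMaxOn_iff.mp hqmax q' hq'F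
      linarith
    · -- no augmenting path: the reachable set gives a cut, contradicting the cut condition
      push_neg at hA
      set A : Finset (Fin n) := univ.filter (fun γ => MFReach n c q (.inl γ)) with hAdef
      set B' : Finset (Fin n) := univ.filter (fun k => MFReach n c q (.inr k)) with hBdef
      have hmemA : ∀ γ, γ ∈ A ↔ MFReach n c q (.inl γ) := by
        intro γ; simp [hAdef]
      have hmemB : ∀ k, k ∈ B' ↔ MFReach n c q (.inr k) := by
        intro k; simp [hBdef]
      have hAne : A.Nonempty := ⟨γd, (hmemA γd).mpr (MFReach.base γd hγd)⟩
      have f1 : ∀ γ ∉ A, ∑ k, q k γ = 1 := by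
        intro γ hγ
        refine le_antisymm (hqF.2.1 γ) ?_
        by_contra hlt1
        push_neg at hlt1
        exact hγ ((hmemA γ).mpr (MFReach.base γ hlt1))
      have f2 : ∀ k ∈ B', ∑ γ, q k γ = 1 := fun k hk =>
        le_antisymm (hqF.2.2 k) (hA k ((hmemB k).mp hk))
      have f3 : ∀ γ ∈ A, ∀ k ∉ B', q k γ = c k γ := by
        intro γ hγ k hk
        by_contra hne
        have hlt2 : q k γ < c k γ := lt_of_le_of_ne (hqF.1 k γ).2 hne
        exact hk ((hmemB k).mpr (MFReach.fwd γ k ((hmemA γ).mp hγ) hlt2))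
      have f4 : ∀ γ ∉ A, ∀ k ∈ B', q k γ = 0 := by
        intro γ hγ k hk
        by_contra hne
        have hpos : 0 < q k γ := lt_of_le_of_ne (hqF.1 k γ).1 (Ne.symm hne)
        exact hγ ((hmemA γ).mpr (MFReach.bwd k γ ((hmemB k).mp hk) hpos))
      -- cardinal casts
      have hcardA : (A.card : ℝ) + Aᶜ.card = n := by
        have := Finset.card_add_card_compl A
        rw [Fintype.card_fin] at this
        exact_mod_cast this
      have hcardB : (B'.card : ℝ) + B'ᶜ.card = n := by
        have := Finset.card_add_card_compl B'
        rw [Fintype.card_fin] at this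
        exact_mod_cast this
      -- compute the total
      have h1 : ∑ γ ∈ Aᶜ, ∑ k, q k γ = (Aᶜ.card : ℝ) := by
        rw [Finset.sum_congr rfl (fun γ hγ => f1 γ (Finset.mem_compl.mp hγ))]
        simp
      have h2 : ∀ γ ∈ A, ∑ k, q k γ = ∑ k ∈ B'ᶜ, c k γ + ∑ k ∈ B', q k γ := by
        intro γ hγ
        rw [← Finset.sum_compl_add_sum B' (fun k => q k γ)]
        congr 1
        exact Finset.sum_congr rfl fun k hk => f3 γ hγ k (Finset.mem_compl.mp hk)
      have h3 : ∑ γ ∈ A, ∑ k ∈ B', q k γ = (B'.card : ℝ) := by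
        rw [Finset.sum_comm]
        have : ∀ k ∈ B', ∑ γ ∈ A, q k γ = 1 := by
          intro k hk
          have hsplit := Finset.sum_compl_add_sum A (fun γ => q k γ)
          have hz : ∑ γ ∈ Aᶜ, q k γ = 0 :=
            Finset.sum_eq_zero fun γ hγ => f4 γ (Finset.mem_compl.mp hγ) k hk
          rw [hz, zero_add] at hsplit
          rw [hsplit]
          exact f2 k hk
        rw [Finset.sum_congr rfl this]
        simp
      set S : ℝ := ∑ γ ∈ A, ∑ k ∈ B'ᶜ, c k γ with hSdef
      have hS0 : 0 ≤ S :=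
        Finset.sum_nonneg fun γ _ => Finset.sum_nonneg fun k _ => hc0 k γ
      have htotal : ∑ γ, ∑ k, q k γ = (Aᶜ.card : ℝ) + (B'.card : ℝ) + S := by
        rw [← Finset.sum_compl_add_sum A (fun γ => ∑ k, q k γ), h1,
          Finset.sum_congr rfl h2, Finset.sum_add_distrib, h3, hSdef]
        ring
      by_cases hB'univ : B' = univ
      · have : (B'.card : ℝ) = n := by rw [hB'univ]; simp
        have hAc0 : (0:ℝ) ≤ (Aᶜ.card : ℝ) := by positivity
        linarith
      · have hBne : B'ᶜ.Nonempty := by rwa [Finset.nonempty_iff_ne_empty, Ne, Finset.compl_eq_empty_iff]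
        by_cases hAuniv : A = univ
        · -- column condition gives total ≥ n
          have hSge : (B'ᶜ.card : ℝ) ≤ S := by
            rw [hSdef, hAuniv, Finset.sum_comm]
            calc (B'ᶜ.card : ℝ) = ∑ _k ∈ B'ᶜ, (1:ℝ) := by simp
              _ ≤ ∑ k ∈ B'ᶜ, ∑ γ, c k γ :=
                  Finset.sum_le_sum fun k _ => hcol k
          have hAc : (Aᶜ.card : ℝ) = 0 := by rw [hAuniv]; simp
          linarith
        · by_cases hB'e : B' = ∅
          · -- row condition gives total ≥ n
            have hBcu : B'ᶜ = univ := by rw [hB'e]; simp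
            have hSge : (A.card : ℝ) ≤ S := by
              rw [hSdef, hBcu]
              calc (A.card : ℝ) = ∑ _γ ∈ A, (1:ℝ) := by simp
                _ ≤ ∑ γ ∈ A, ∑ k ∈ univ, c k γ :=
                    Finset.sum_le_sum fun γ _ => hrow γ
            linarith
          · -- the genuine cut condition
            have hB'ne : B'.Nonempty := Finset.nonempty_iff_ne_empty.mpr hB'e
            have hBne2 : B'ᶜ ≠ univ := by
              intro hcon
              have : B' = ∅ := by
                have := congrArg compl hcon
                simpa using this
              exact hB'e this
            have hcut' := hcut A B'ᶜ hAne hAuniv hBne hBne2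
            have hSeq : S = (1 + η) * ∑ γ ∈ A, ∑ k ∈ B'ᶜ, p k γ := by
              rw [hSdef, Finset.mul_sum]
              exact Finset.sum_congr rfl fun γ _ => by rw [Finset.mul_sum]
            rw [← hSeq] at hcut'
            linarith
  -- From total ≥ n and all row/column sums ≤ 1, conclude equality everywhere.
  have htot_le : ∑ γ, ∑ k, q k γ ≤ n := by
    calc ∑ γ, ∑ k, q k γ ≤ ∑ _γ : Fin n, (1:ℝ) := Finset.sum_le_sum fun γ _ => hqF.2.1 γ
      _ = n := by simp
  have htoteq : ∑ γ, ∑ k, q k γ = n := le_antisymm htot_le key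
  have hrow1 : ∀ γ, ∑ k, q k γ = 1 := by
    intro γ
    refine le_antisymm (hqF.2.1 γ) ?_
    by_contra hlt1
    push_neg at hlt1
    have : ∑ γ, ∑ k, q k γ < ∑ _γ : Fin n, (1:ℝ) :=
      Finset.sum_lt_sum (fun i _ => hqF.2.1 i) ⟨γ, Finset.mem_univ _, hlt1⟩
    simp at this
    linarith
  have hcol1 : ∀ k, ∑ γ, q k γ = 1 := by
    intro k
    refine le_antisymm (hqF.2.2 k) ?_
    by_contra hlt1
    push_neg at hlt1
    have htoteq' : ∑ k, ∑ γ, q k γ = n := by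
      rw [Finset.sum_comm]; exact htoteq
    have : ∑ k, ∑ γ, q k γ < ∑ _k : Fin n, (1:ℝ) :=
      Finset.sum_lt_sum (fun i _ => hqF.2.2 i) ⟨k, Finset.mem_univ _, hlt1⟩
    simp at this
    linarith
  exact ⟨q, fun k γ => (hqF.1 k γ).1, hrow1, hcol1, fun k γ => (hqF.1 k γ).2⟩
end

section
/- Let a, b ∈ (0,1] with a + b > 1, let x, y ∈ ℝ and δ ≥ 0, and suppose |a·x + (1−a)·y| ≤ a·b·δ and a·x² + (1−a)·y² ≤ a·b·δ. Then a·x ≤ 2·a·b·√δ (indeed a·|x| ≤ a·b·(δ + √δ) ≤ 2·a·b·√δ when δ ≤ 1). -/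
/-!
Write `m = a x + (1 - a) y` for the weighted mean. Since
`a x² + (1 - a) y² = m² + a (1 - a) (x - y)²`, the second-moment bound controls the spread
`a (1 - a) |x - y|` by `√(a (1 - a) · a b δ) ≤ a b √δ`, using `1 - a < b`. The first-moment
bound controls `a m ≤ a b δ ≤ a b √δ`, and `a x = a m + a (1 - a) (x - y)`.
-/

section WeightedMean

variable {R : Type*} [CommRing R]

theorem mul_eq_mul_weightedMean_add_spread (a x y : R) :
    a * x = a * (a * x + (1 - a) * y) + a * (1 - a) * (x - y) := by
  ring

theorem weighted_sq_add_eq_sq_weightedMean_add_spread (a x y : R) :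
    a * x ^ 2 + (1 - a) * y ^ 2 = (a * x + (1 - a) * y) ^ 2 + a * (1 - a) * (x - y) ^ 2 := by
  ring

end WeightedMean

theorem abs_spread_le_sqrt_weighted_sq_add {a : ℝ} (ha0 : 0 ≤ a) (ha1 : a ≤ 1) (x y : ℝ) :
    |a * (1 - a) * (x - y)| ≤ √(a * (1 - a) * (a * x ^ 2 + (1 - a) * y ^ 2)) := by
  have hw : 0 ≤ a * (1 - a) := mul_nonneg ha0 (sub_nonneg.mpr ha1)
  refine Real.abs_le_sqrt ?_
  rw [weighted_sq_add_eq_sq_weightedMean_add_spread]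
  nlinarith [mul_nonneg hw (sq_nonneg (a * x + (1 - a) * y))]

theorem first_second_moment_bound_general (a b x y δ : ℝ)
    (ha : 0 < a) (ha1 : a ≤ 1) (hb : 0 < b)
    (hab : 1 < a + b) (hδ0 : 0 ≤ δ) (hδ1 : δ ≤ 1)
    (h1 : |a * x + (1 - a) * y| ≤ a * b * δ)
    (h2 : a * x ^ 2 + (1 - a) * y ^ 2 ≤ a * b * δ) :
    a * x ≤ 2 * a * b * Real.sqrt δ := by
  have hab0 : 0 ≤ a * b := by positivity
  have hδ : δ ≤ √δ := Real.le_sqrt_self_iff.mpr hδ1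
  have hmean : a * (a * x + (1 - a) * y) ≤ a * b * √δ :=
    calc a * (a * x + (1 - a) * y) ≤ a * (a * b * δ) := by gcongr; exact (abs_le.mp h1).2
      _ ≤ a * b * δ := mul_le_of_le_one_left (by positivity) ha1
      _ ≤ a * b * √δ := by gcongr
  have hspread : a * (1 - a) * (x - y) ≤ a * b * √δ :=
    calc a * (1 - a) * (x - y) ≤ √(a * (1 - a) * (a * x ^ 2 + (1 - a) * y ^ 2)) :=
          (le_abs_self _).trans (abs_spread_le_sqrt_weighted_sq_add ha.le ha1 x y)
      _ ≤ √((a * b) ^ 2 * δ) := Real.sqrt_le_sqrt <|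
          calc a * (1 - a) * (a * x ^ 2 + (1 - a) * y ^ 2) ≤ a * (1 - a) * (a * b * δ) := by
                gcongr
            _ ≤ a * b * (a * b * δ) := by gcongr; linarith
            _ = (a * b) ^ 2 * δ := by ring
      _ = a * b * √δ := by rw [Real.sqrt_mul (sq_nonneg _), Real.sqrt_sq hab0]
  rw [mul_eq_mul_weightedMean_add_spread a x y]
  linarith

/-- From a first-moment and a second-moment bound, deduce `a·x ≤ 2·a·b·√δ`. -/
theorem first_second_moment_bound (a b x y δ : ℝ)
    (ha : 0 < a) (ha1 : a ≤ 1) (hb : 0 < b) (hb1 : b ≤ 1)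
    (hab : 1 < a + b) (hδ0 : 0 ≤ δ) (hδ1 : δ ≤ 1)
    (h1 : |a * x + (1 - a) * y| ≤ a * b * δ)
    (h2 : a * x ^ 2 + (1 - a) * y ^ 2 ≤ a * b * δ) :
    a * x ≤ 2 * a * b * Real.sqrt δ :=
  first_second_moment_bound_general a b x y δ ha ha1 hb hab hδ0 hδ1 h1 h2
end

section
/- Let n ≥ 1, C > 0, and let p : K × S → ℝ≥0 with |K| = |S| = n satisfy: (i) p(k,γ) ≤ C/n for all (k,γ); (ii) for each column k, |∑_γ p(k,γ) − 1| ≤ C·log n/√n; (iii) for each γ, ∑_k p(k,γ) = 1; (iv) for all k ≠ l, ∑_γ p(k,γ)p(l,γ) ≤ (1 + C·log n/√n)/n. Then there is a constant C' = C'(C) such that for all nonempty proper A ⊊ S, B ⊊ K with |A| + |B| > n, writing a = |A|/n, b = |B|/n, x = b − (1/|A|)∑_{γ∈A} p(B,γ), one has a·|x| ≤ C'·a·b·n^{−1/4}(log n)^{1/2} for all sufficiently large n. -/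
open Finset

lemma aux_sum_rows {n : ℕ} (p : Fin n → Fin n → ℝ) (ε : ℝ)
    (h2 : ∀ k : Fin n, |(∑ γ, p k γ) - 1| ≤ ε) (B' : Finset (Fin n)) :
    |(∑ γ, ∑ k ∈ B', p k γ) - B'.card| ≤ B'.card * ε := by
  rw [Finset.sum_comm]
  have e : (∑ k ∈ B', ∑ γ, p k γ) - B'.card = ∑ k ∈ B', ((∑ γ, p k γ) - 1) := by
    rw [Finset.sum_sub_distrib, Finset.sum_const, nsmul_eq_mul, mul_one]
  rw [e]
  calc |∑ k ∈ B', ((∑ γ, p k γ) - 1)| ≤ ∑ k ∈ B', |(∑ γ, p k γ) - 1| :=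
        Finset.abs_sum_le_sum_abs _ _
    _ ≤ ∑ _k ∈ B', ε := Finset.sum_le_sum fun k _ => h2 k
    _ = B'.card * ε := by rw [Finset.sum_const, nsmul_eq_mul]

lemma aux_cs {n : ℕ} (g : Fin n → ℝ) (A' : Finset (Fin n)) :
    (∑ γ ∈ A', g γ) ^ 2 ≤ A'.card * ∑ γ, (g γ) ^ 2 := by
  calc (∑ γ ∈ A', g γ) ^ 2 ≤ A'.card * ∑ γ ∈ A', (g γ) ^ 2 := sq_sum_le_card_mul_sum_sq
    _ ≤ A'.card * ∑ γ, (g γ) ^ 2 := by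
        apply mul_le_mul_of_nonneg_left _ (by positivity)
        exact Finset.sum_le_sum_of_subset_of_nonneg (Finset.subset_univ _)
          (fun i _ _ => sq_nonneg _)

lemma aux_var {n : ℕ} (hn : 0 < n) (C ε : ℝ) (hC : 0 < C) (hε0 : 0 ≤ ε) (hε1 : ε ≤ 1)
    (p : Fin n → Fin n → ℝ)
    (h0 : ∀ k γ, 0 ≤ p k γ) (h1 : ∀ k γ, p k γ ≤ C / n)
    (h2 : ∀ k : Fin n, |(∑ γ, p k γ) - 1| ≤ ε)
    (h4 : ∀ k l : Fin n, k ≠ l → ∑ γ, p k γ * p l γ ≤ (1 + ε) / n)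
    (B' : Finset (Fin n)) :
    ∑ γ, ((∑ k ∈ B', p k γ) - B'.card / n) ^ 2
      ≤ 3 * (B'.card : ℝ) ^ 2 / n * ε + 2 * C * B'.card / n := by
  have hnn : (0:ℝ) < n := by exact_mod_cast hn
  set m : ℝ := (B'.card : ℝ) with hm_def
  have hm0 : 0 ≤ m := by positivity
  have hrow : ∀ k : Fin n, 1 - ε ≤ (∑ γ, p k γ) ∧ (∑ γ, p k γ) ≤ 1 + ε := by
    intro k
    have := abs_sub_le_iff.mp (h2 k)
    constructor <;> linarith [this.1, this.2]
  -- lower bound on total sum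
  have hsum_lo : m * (1 - ε) ≤ ∑ γ, ∑ k ∈ B', p k γ := by
    rw [Finset.sum_comm]
    calc m * (1 - ε) = ∑ _k ∈ B', (1 - ε) := by rw [Finset.sum_const, nsmul_eq_mul]
      _ ≤ ∑ k ∈ B', ∑ γ, p k γ := Finset.sum_le_sum fun k _ => (hrow k).1
  -- bound on sum of squares
  have hsq : ∑ γ, (∑ k ∈ B', p k γ) ^ 2 ≤ m ^ 2 * (1 + ε) / n + C * m * (1 + ε) / n := by
    have expand : ∑ γ, (∑ k ∈ B', p k γ) ^ 2
        = ∑ k ∈ B', ∑ l ∈ B', ∑ γ, p k γ * p l γ := by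
      have : ∀ γ : Fin n, (∑ k ∈ B', p k γ) ^ 2 = ∑ k ∈ B', ∑ l ∈ B', p k γ * p l γ := by
        intro γ; rw [sq, Finset.sum_mul_sum]
      rw [Finset.sum_congr rfl fun γ _ => this γ]
      rw [Finset.sum_comm]
      exact Finset.sum_congr rfl fun k _ => Finset.sum_comm
    rw [expand]
    have hterm : ∀ k ∈ B', ∀ l ∈ B', ∑ γ, p k γ * p l γ
        ≤ (1 + ε) / n + (if l = k then C * (1 + ε) / n else 0) := by
      intro k _ l _
      by_cases hkl : l = k
      · subst hkl
        simp only [if_pos rfl]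
        have : ∑ γ, p l γ * p l γ ≤ C / n * (1 + ε) := by
          calc ∑ γ, p l γ * p l γ ≤ ∑ γ, C / n * p l γ :=
                Finset.sum_le_sum fun γ _ =>
                  mul_le_mul_of_nonneg_right (h1 l γ) (h0 l γ)
            _ = C / n * ∑ γ, p l γ := by rw [Finset.mul_sum]
            _ ≤ C / n * (1 + ε) := by
                apply mul_le_mul_of_nonneg_left (hrow l).2 (by positivity)
        have hpos : 0 ≤ (1 + ε) / n := by positivity
        calc ∑ γ, p l γ * p l γ ≤ C / n * (1 + ε) := this
          _ = C * (1 + ε) / n := by ring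
          _ ≤ (1 + ε) / n + C * (1 + ε) / n := le_add_of_nonneg_left hpos
      · simp only [if_neg hkl]
        rw [add_zero]
        exact h4 k l (fun h => hkl (h ▸ rfl))
    calc ∑ k ∈ B', ∑ l ∈ B', ∑ γ, p k γ * p l γ
        ≤ ∑ k ∈ B', ∑ l ∈ B', ((1 + ε) / n + (if l = k then C * (1 + ε) / n else 0)) := by
          apply Finset.sum_le_sum; intro k hk
          exact Finset.sum_le_sum fun l hl => hterm k hk l hl
      _ = m ^ 2 * (1 + ε) / n + m * (C * (1 + ε) / n) := by
          simp only [Finset.sum_add_distrib, Finset.sum_const, nsmul_eq_mul]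
          rw [Finset.sum_congr rfl fun k (hk : k ∈ B') =>
            (Finset.sum_ite_eq' B' k (fun _ => C * (1 + ε) / n)).trans (if_pos hk)]
          rw [Finset.sum_const, nsmul_eq_mul]
          ring
      _ = m ^ 2 * (1 + ε) / n + C * m * (1 + ε) / n := by ring
  have expand2 : ∑ γ, ((∑ k ∈ B', p k γ) - m / n) ^ 2
      = (∑ γ, (∑ k ∈ B', p k γ) ^ 2) - 2 * (m / n) * (∑ γ, ∑ k ∈ B', p k γ) + m ^ 2 / n := by
    have e : ∀ γ : Fin n, ((∑ k ∈ B', p k γ) - m / n) ^ 2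
        = (∑ k ∈ B', p k γ) ^ 2 - 2 * (m / n) * (∑ k ∈ B', p k γ) + (m / n) ^ 2 :=
      fun γ => by ring
    rw [Finset.sum_congr rfl fun γ _ => e γ]
    rw [Finset.sum_add_distrib, Finset.sum_sub_distrib, ← Finset.mul_sum, Finset.sum_const,
      Finset.card_univ, Fintype.card_fin, nsmul_eq_mul]
    field_simp
  rw [expand2]
  have key : (m / n) * (m * (1 - ε)) ≤ (m / n) * (∑ γ, ∑ k ∈ B', p k γ) :=
    mul_le_mul_of_nonneg_left hsum_lo (by positivity)
  have k2 : C * m * (1 + ε) / (n:ℝ) ≤ 2 * C * m / n :=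
    (div_le_div_iff_of_pos_right hnn).mpr (by nlinarith [mul_nonneg hC.le hm0])
  have k1 : 2 * (m / (n:ℝ)) * (m * (1 - ε)) ≤ 2 * (m / n) * (∑ γ, ∑ k ∈ B', p k γ) := by
    linarith [key]
  have e3 : m ^ 2 * (1 + ε) / (n:ℝ) + C * m * (1 + ε) / n - 2 * (m / n) * (m * (1 - ε)) + m ^ 2 / n
      = 3 * m ^ 2 / n * ε + C * m * (1 + ε) / n := by ring
  linarith [hsq, k1, k2, e3.le, e3.ge]

lemma sqrt_le_of_sq_le {u R : ℝ} (hR : 0 ≤ R) (h : u ≤ R ^ 2) : Real.sqrt u ≤ R := by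
  calc Real.sqrt u ≤ Real.sqrt (R ^ 2) := Real.sqrt_le_sqrt h
    _ = R := Real.sqrt_sq hR

lemma sqrt_add_le' {u v : ℝ} (hu : 0 ≤ u) (hv : 0 ≤ v) :
    Real.sqrt (u + v) ≤ Real.sqrt u + Real.sqrt v := by
  apply sqrt_le_of_sq_le (by positivity)
  nlinarith [Real.sq_sqrt hu, Real.sq_sqrt hv, Real.sqrt_nonneg u, Real.sqrt_nonneg v,
    mul_nonneg (Real.sqrt_nonneg u) (Real.sqrt_nonneg v)]

set_option maxHeartbeats 1000000 in
lemma assemble (C nn X Y m s t D : ℝ) (hC : 0 < C) (hnn : 0 < nn)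
    (hX : 0 < X) (hY : 0 < Y) (hm : 0 ≤ m) (hs : 0 ≤ s) (ht : 0 < t) (ht1 : t ≤ 1)
    (hnt : 1 ≤ nn * t ^ 2)
    (g1 : nn * m ≤ 2 * X * Y) (g2 : nn * s * m ^ 2 ≤ 2 * X ^ 2 * Y ^ 2)
    (g3 : nn ^ 2 * s * m ≤ 4 * X ^ 2 * Y ^ 2)
    (hD0 : 0 ≤ D)
    (hD : D ≤ m * (C * t ^ 2) + Real.sqrt (s * (3 * m ^ 2 / nn * (C * t ^ 2) + 2 * C * m / nn))) :
    D / nn ≤ (2 * C + Real.sqrt (6 * C) + 3 * Real.sqrt C + 1) * (X / nn) * (Y / nn) * t := by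
  have hXYt : 0 < X * Y * t / nn := by positivity
  -- term 1
  have t1 : m * (C * t ^ 2) ≤ 2 * C * (X * Y * t / nn) := by
    have hm' : m ≤ 2 * X * Y / nn := (le_div_iff₀ hnn).mpr (by linarith)
    have ht2 : t ^ 2 ≤ t := by nlinarith
    have : m * t ^ 2 ≤ (2 * X * Y / nn) * t :=
      mul_le_mul hm' ht2 (by positivity) (by positivity)
    calc m * (C * t ^ 2) = C * (m * t ^ 2) := by ring
      _ ≤ C * ((2 * X * Y / nn) * t) := by
          exact mul_le_mul_of_nonneg_left this hC.le
      _ = 2 * C * (X * Y * t / nn) := by ring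
  -- term 2
  have hsm2 : s * m ^ 2 ≤ 2 * X ^ 2 * Y ^ 2 / nn := (le_div_iff₀ hnn).mpr (by linarith)
  have hsm : s * m ≤ 4 * X ^ 2 * Y ^ 2 / nn ^ 2 := by
    rw [le_div_iff₀ (by positivity)]
    nlinarith [g3]
  have t2a : Real.sqrt (3 * C * (s * m ^ 2) * t ^ 2 / nn)
      ≤ Real.sqrt (6 * C) * (X * Y * t / nn) := by
    apply sqrt_le_of_sq_le (by positivity)
    have e : (Real.sqrt (6 * C) * (X * Y * t / nn)) ^ 2
        = 6 * C * (X ^ 2 * Y ^ 2) * t ^ 2 / nn ^ 2 := by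
      rw [mul_pow, Real.sq_sqrt (by positivity : (0:ℝ) ≤ 6 * C)]
      ring
    rw [e, div_le_div_iff₀ hnn (by positivity)]
    have h := mul_le_mul_of_nonneg_left g2 (show (0:ℝ) ≤ 3 * C * t ^ 2 * nn by positivity)
    linarith [h]
  have t2b : Real.sqrt (2 * C * (s * m) / nn) ≤ 3 * Real.sqrt C * (X * Y * t / nn) := by
    apply sqrt_le_of_sq_le (by positivity)
    have e : (3 * Real.sqrt C * (X * Y * t / nn)) ^ 2
        = 9 * C * (X * Y * t / nn) ^ 2 := by
      rw [mul_pow, mul_pow, Real.sq_sqrt hC.le]; ring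
    rw [e]
    have step1 : 2 * C * (s * m) / nn ≤ 8 * C * (X ^ 2 * Y ^ 2) / nn ^ 3 := by
      rw [div_le_div_iff₀ hnn (by positivity)]
      have h := mul_le_mul_of_nonneg_left g3 (show (0:ℝ) ≤ 2 * C * nn by positivity)
      linarith [h]
    have step2 : 8 * C * (X ^ 2 * Y ^ 2) / nn ^ 3 ≤ 9 * C * (X * Y * t / nn) ^ 2 := by
      have e2 : 9 * C * (X * Y * t / nn) ^ 2 = 9 * C * (X ^ 2 * Y ^ 2) * t ^ 2 / nn ^ 2 := by
        ring
      rw [e2, div_le_div_iff₀ (by positivity) (by positivity)]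
      have h := mul_le_mul_of_nonneg_left hnt
        (show (0:ℝ) ≤ 8 * C * (X ^ 2 * Y ^ 2) * nn ^ 2 by positivity)
      have h9 : 0 ≤ C * (X ^ 2 * Y ^ 2) * nn ^ 3 * t ^ 2 := by positivity
      linarith [h, h9]
    linarith
  have split : Real.sqrt (s * (3 * m ^ 2 / nn * (C * t ^ 2) + 2 * C * m / nn))
      ≤ Real.sqrt (3 * C * (s * m ^ 2) * t ^ 2 / nn) + Real.sqrt (2 * C * (s * m) / nn) := by
    have e : s * (3 * m ^ 2 / nn * (C * t ^ 2) + 2 * C * m / nn)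
        = 3 * C * (s * m ^ 2) * t ^ 2 / nn + 2 * C * (s * m) / nn := by ring
    rw [e]
    exact sqrt_add_le' (by positivity) (by positivity)
  have total : D ≤ (2 * C + Real.sqrt (6 * C) + 3 * Real.sqrt C) * (X * Y * t / nn) := by
    calc D ≤ m * (C * t ^ 2) + Real.sqrt (s * (3 * m ^ 2 / nn * (C * t ^ 2) + 2 * C * m / nn)) := hD
      _ ≤ 2 * C * (X * Y * t / nn) + (Real.sqrt (3 * C * (s * m ^ 2) * t ^ 2 / nn)
            + Real.sqrt (2 * C * (s * m) / nn)) := by linarith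
      _ ≤ 2 * C * (X * Y * t / nn) + (Real.sqrt (6 * C) * (X * Y * t / nn)
            + 3 * Real.sqrt C * (X * Y * t / nn)) := by linarith
      _ = (2 * C + Real.sqrt (6 * C) + 3 * Real.sqrt C) * (X * Y * t / nn) := by ring
  have final : D / nn ≤ (2 * C + Real.sqrt (6 * C) + 3 * Real.sqrt C) * (X * Y * t / nn) / nn :=
    (div_le_div_iff_of_pos_right hnn).mpr total
  have hP : 0 ≤ X / nn * (Y / nn) * t := by positivity
  calc D / nn ≤ (2 * C + Real.sqrt (6 * C) + 3 * Real.sqrt C) * (X * Y * t / nn) / nn := final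
    _ = (2 * C + Real.sqrt (6 * C) + 3 * Real.sqrt C) * (X / nn) * (Y / nn) * t := by
        field_simp
    _ ≤ (2 * C + Real.sqrt (6 * C) + 3 * Real.sqrt C + 1) * (X / nn) * (Y / nn) * t := by
        have e4 : (2 * C + Real.sqrt (6 * C) + 3 * Real.sqrt C + 1) * (X / nn) * (Y / nn) * t
            = (2 * C + Real.sqrt (6 * C) + 3 * Real.sqrt C) * (X / nn) * (Y / nn) * t
              + X / nn * (Y / nn) * t := by ring
        rw [e4]
        linarith [hP]

lemma prods (nn X Y m s : ℝ) (hm0 : 0 ≤ m) (hs0 : 0 ≤ s) (hX : 0 < X) (hY : 0 < Y)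
    (hnn : 0 ≤ nn) (hsum : nn ≤ X + Y)
    (hmX : m ≤ X) (hmY : m ≤ Y) (hsX : s ≤ X) (hsY : s ≤ Y) :
    nn * m ≤ 2 * X * Y ∧ nn * s * m ^ 2 ≤ 2 * X ^ 2 * Y ^ 2 ∧
      nn ^ 2 * s * m ≤ 4 * X ^ 2 * Y ^ 2 := by
  have hm2 : m ^ 2 ≤ X * Y := by nlinarith
  refine ⟨?_, ?_, ?_⟩
  · nlinarith [mul_le_mul_of_nonneg_right hsum hm0]
  · calc nn * s * m ^ 2 = nn * (s * m ^ 2) := by ring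
      _ ≤ (X + Y) * (s * m ^ 2) :=
          mul_le_mul_of_nonneg_right hsum (mul_nonneg hs0 (sq_nonneg m))
      _ = X * (s * m ^ 2) + Y * (s * m ^ 2) := by ring
      _ ≤ X * (Y * (X * Y)) + Y * (X * (X * Y)) := by
          have h1 : s * m ^ 2 ≤ Y * (X * Y) := mul_le_mul hsY hm2 (sq_nonneg m) hY.le
          have h2 : s * m ^ 2 ≤ X * (X * Y) := mul_le_mul hsX hm2 (sq_nonneg m) hX.le
          have := mul_le_mul_of_nonneg_left h1 hX.le
          have := mul_le_mul_of_nonneg_left h2 hY.le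
          linarith
      _ = 2 * X ^ 2 * Y ^ 2 := by ring
  · have e1 : s * m ≤ Y ^ 2 := by nlinarith [mul_le_mul hsY hmY hm0 hY.le]
    have e2 : s * m ≤ X ^ 2 := by nlinarith [mul_le_mul hsX hmX hm0 hX.le]
    have e3 : s * m ≤ X * Y := mul_le_mul hsX hmY hm0 hX.le
    calc nn ^ 2 * s * m = nn ^ 2 * (s * m) := by ring
      _ ≤ (X + Y) ^ 2 * (s * m) :=
          mul_le_mul_of_nonneg_right (pow_le_pow_left₀ hnn hsum 2) (mul_nonneg hs0 hm0)
      _ = X ^ 2 * (s * m) + 2 * (X * Y) * (s * m) + Y ^ 2 * (s * m) := by ring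
      _ ≤ X ^ 2 * Y ^ 2 + 2 * (X * Y) * (X * Y) + Y ^ 2 * X ^ 2 := by
          have := mul_le_mul_of_nonneg_left e1 (sq_nonneg X)
          have := mul_le_mul_of_nonneg_left e3 (by positivity : (0:ℝ) ≤ 2 * (X * Y))
          have := mul_le_mul_of_nonneg_left e2 (sq_nonneg Y)
          linarith
      _ = 4 * X ^ 2 * Y ^ 2 := by ring

set_option maxHeartbeats 1600000 in
/-- The heart of the dominated-matching lemma: for a good state `p`, the block
deficiency `x` satisfies `a·|x| ≤ C'·a·b·n^{-1/4}(log n)^{1/2}` for large `n`. -/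
theorem block_deficiency_bound (C : ℝ) (hC : 0 < C) :
    ∃ C' : ℝ, 0 < C' ∧ ∃ N : ℕ, ∀ n : ℕ, N ≤ n →
      ∀ p : Fin n → Fin n → ℝ,
        (∀ k γ, 0 ≤ p k γ) →
        (∀ k γ, p k γ ≤ C / n) →
        (∀ k : Fin n, |(∑ γ, p k γ) - 1| ≤ C * Real.log n / Real.sqrt n) →
        (∀ γ : Fin n, ∑ k, p k γ = 1) →
        (∀ k l : Fin n, k ≠ l →
          ∑ γ, p k γ * p l γ ≤ (1 + C * Real.log n / Real.sqrt n) / n) →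
        ∀ A B : Finset (Fin n), A.Nonempty → A ≠ Finset.univ →
          B.Nonempty → B ≠ Finset.univ → n < A.card + B.card →
          ((A.card : ℝ) / n) *
              |(B.card : ℝ) / n - (1 / (A.card : ℝ)) * ∑ γ ∈ A, ∑ k ∈ B, p k γ| ≤
            C' * ((A.card : ℝ) / n) * ((B.card : ℝ) / n) *
              (n : ℝ) ^ (-(1 / 4 : ℝ)) * (Real.log n) ^ ((1 / 2 : ℝ)) := by
  refine ⟨2 * C + Real.sqrt (6 * C) + 3 * Real.sqrt C + 1, by positivity,
    max 256 (⌈(4 * C) ^ 4⌉₊ + 1), ?_⟩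
  intro n hn p h0 h1 h2 h3 h4 A B hA0 hAu hB0 hBu hcard
  have hn256 : 256 ≤ n := le_trans (le_max_left _ _) hn
  have hnpos : 0 < n := by omega
  have hnnpos : (0:ℝ) < (n:ℝ) := by exact_mod_cast hnpos
  have hnn256 : (256:ℝ) ≤ (n:ℝ) := by exact_mod_cast hn256
  have hnC : ((4 * C) ^ 4 : ℝ) ≤ (n:ℝ) := by
    have h' : ⌈(4 * C) ^ 4⌉₊ + 1 ≤ n := le_trans (le_max_right _ _) hn
    have h'' : ((⌈(4 * C) ^ 4⌉₊ : ℕ) : ℝ) ≤ (n:ℝ) := by exact_mod_cast Nat.le_of_succ_le h'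
    exact (Nat.le_ceil _).trans h''
  set ε : ℝ := C * Real.log n / Real.sqrt n with hε_def
  set q : ℝ := Real.sqrt (Real.sqrt n) with hq_def
  have hsqn : (0:ℝ) < Real.sqrt n := Real.sqrt_pos.mpr hnnpos
  have hq0 : 0 < q := Real.sqrt_pos.mpr hsqn
  have hq2 : q ^ 2 = Real.sqrt n := Real.sq_sqrt hsqn.le
  have hq4 : q ^ 4 = (n:ℝ) := by
    have h2' : (Real.sqrt n) ^ 2 = (n:ℝ) := Real.sq_sqrt hnnpos.le
    nlinarith [hq2]
  have hq_ge4 : 4 ≤ q := by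
    by_contra hcon
    push_neg at hcon
    have h2' : q ^ 2 < 16 := by nlinarith
    nlinarith [h2', sq_nonneg q, hq4, hnn256]
  have hqC : 4 * C ≤ q := by
    have h' := hnC
    rw [← hq4] at h'
    exact le_of_pow_le_pow_left₀ (by norm_num) hq0.le h'
  have hlog_le : Real.log n ≤ 4 * q := by
    have e : Real.log n = 4 * Real.log q := by
      rw [← hq4, Real.log_pow]
      norm_num
    rw [e]
    have := Real.log_le_sub_one_of_pos hq0
    linarith
  have hlog1 : 1 ≤ Real.log n := by
    rw [Real.le_log_iff_exp_le hnnpos]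
    have := Real.exp_one_lt_d9
    linarith
  have hlog0 : (0:ℝ) ≤ Real.log n := by linarith
  set L : ℝ := Real.sqrt (Real.log n) with hL_def
  have hL1 : 1 ≤ L := by
    rw [hL_def, show (1:ℝ) = Real.sqrt 1 by simp]
    exact Real.sqrt_le_sqrt hlog1
  have hL0 : 0 < L := by linarith
  have hLq : L ≤ q := by
    rw [hL_def, hq_def]
    apply Real.sqrt_le_sqrt
    calc Real.log n ≤ 4 * q := hlog_le
      _ ≤ q * q := by nlinarith
      _ = Real.sqrt n := by nlinarith [hq2]
  set t : ℝ := L / q with ht_def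
  have ht0 : 0 < t := by positivity
  have ht1 : t ≤ 1 := by rw [ht_def, div_le_one hq0]; exact hLq
  have hL2 : L ^ 2 = Real.log n := Real.sq_sqrt hlog0
  have hεt2 : ε = C * t ^ 2 := by
    rw [hε_def, ht_def, div_pow, hL2, hq2]
    ring
  have hε0 : 0 ≤ ε := by positivity
  have hε1 : ε ≤ 1 := by
    rw [hε_def, div_le_one hsqn]
    calc C * Real.log n ≤ C * (4 * q) := mul_le_mul_of_nonneg_left hlog_le hC.le
      _ = (4 * C) * q := by ring
      _ ≤ q * q := mul_le_mul_of_nonneg_right hqC hq0.le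
      _ = Real.sqrt n := by nlinarith [hq2]
  have hnt : 1 ≤ (n:ℝ) * t ^ 2 := by
    have hss : Real.sqrt n * Real.sqrt n = (n:ℝ) := Real.mul_self_sqrt hnnpos.le
    have e : (n:ℝ) * t ^ 2 = Real.sqrt n * Real.log n := by
      rw [ht_def, div_pow, hL2, hq2, mul_div_assoc', mul_comm ((n:ℝ)) (Real.log n),
        mul_div_assoc, Real.div_sqrt]
      ring
    rw [e]
    have h16 : (1:ℝ) ≤ Real.sqrt n := by
      rw [show (1:ℝ) = Real.sqrt 1 by simp]
      exact Real.sqrt_le_sqrt (by linarith)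
    nlinarith
  -- rpow facts
  have hr1 : (n:ℝ) ^ (-(1 / 4 : ℝ)) = 1 / q := by
    rw [Real.rpow_neg hnnpos.le]
    rw [show ((1:ℝ) / 4) = (1 / 2 : ℝ) * (1 / 2 : ℝ) by norm_num, Real.rpow_mul hnnpos.le]
    rw [← Real.sqrt_eq_rpow, ← Real.sqrt_eq_rpow, ← hq_def, one_div]
  have hr2 : (Real.log n) ^ ((1 / 2 : ℝ)) = L := by
    rw [← Real.sqrt_eq_rpow, ← hL_def]
  -- cards
  have hAn : A.card ≤ n := by simpa using Finset.card_le_univ A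
  have hBn : B.card ≤ n := by simpa using Finset.card_le_univ B
  have hX0 : (0:ℝ) < (A.card : ℝ) := by exact_mod_cast Finset.card_pos.mpr hA0
  have hY0 : (0:ℝ) < (B.card : ℝ) := by exact_mod_cast Finset.card_pos.mpr hB0
  have hXA0 : A.card ≠ 0 := Finset.card_ne_zero_of_mem hA0.choose_spec
  set S : ℝ := ∑ γ ∈ A, ∑ k ∈ B, p k γ with hS_def
  -- core estimates
  have core : ∀ (A' B'' : Finset (Fin n)),
      |∑ γ ∈ A', ((∑ k ∈ B'', p k γ) - (B''.card : ℝ) / n)|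
        ≤ Real.sqrt ((A'.card : ℝ) *
            (3 * (B''.card : ℝ) ^ 2 / n * ε + 2 * C * (B''.card : ℝ) / n)) := by
    intro A' B''
    rw [← Real.sqrt_sq_eq_abs]
    apply Real.sqrt_le_sqrt
    calc (∑ γ ∈ A', ((∑ k ∈ B'', p k γ) - (B''.card : ℝ) / n)) ^ 2
        ≤ (A'.card : ℝ) * ∑ γ, ((∑ k ∈ B'', p k γ) - (B''.card : ℝ) / n) ^ 2 := aux_cs _ _
      _ ≤ _ := mul_le_mul_of_nonneg_left
          (aux_var hnpos C ε hC hε0 hε1 p h0 h1 h2 h4 B'') (by positivity)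
  have total_flip : ∀ B'' : Finset (Fin n),
      |∑ γ, ((∑ k ∈ B'', p k γ) - (B''.card : ℝ) / n)| ≤ (B''.card : ℝ) * ε := by
    intro B''
    have e : ∑ γ, ((∑ k ∈ B'', p k γ) - (B''.card : ℝ) / n)
        = (∑ γ, ∑ k ∈ B'', p k γ) - (B''.card : ℝ) := by
      rw [Finset.sum_sub_distrib, Finset.sum_const, Finset.card_univ, Fintype.card_fin,
        nsmul_eq_mul]
      have e2 : (n:ℝ) * ((B''.card : ℝ) / n) = (B''.card : ℝ) := by field_simp
      rw [e2]
    rw [e]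
    exact aux_sum_rows p ε h2 B''
  have bound_dir : ∀ B'' : Finset (Fin n),
      |∑ γ ∈ A, ((∑ k ∈ B'', p k γ) - (B''.card : ℝ) / n)|
        ≤ (B''.card : ℝ) * ε + Real.sqrt ((A.card : ℝ) *
            (3 * (B''.card : ℝ) ^ 2 / n * ε + 2 * C * (B''.card : ℝ) / n)) := by
    intro B''
    have h' := core A B''
    have : (0:ℝ) ≤ (B''.card : ℝ) * ε := by positivity
    linarith
  have bound_via : ∀ B'' : Finset (Fin n),
      |∑ γ ∈ A, ((∑ k ∈ B'', p k γ) - (B''.card : ℝ) / n)|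
        ≤ (B''.card : ℝ) * ε + Real.sqrt (((Aᶜ).card : ℝ) *
            (3 * (B''.card : ℝ) ^ 2 / n * ε + 2 * C * (B''.card : ℝ) / n)) := by
    intro B''
    set g : Fin n → ℝ := fun γ => (∑ k ∈ B'', p k γ) - (B''.card : ℝ) / n with hg
    have esplit : ∑ γ ∈ A, g γ = (∑ γ, g γ) - ∑ γ ∈ Aᶜ, g γ := by
      rw [← Finset.sum_add_sum_compl A g]
      ring
    calc |∑ γ ∈ A, g γ| = |(∑ γ, g γ) + -(∑ γ ∈ Aᶜ, g γ)| := by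
          rw [esplit, sub_eq_add_neg]
      _ ≤ |∑ γ, g γ| + |-(∑ γ ∈ Aᶜ, g γ)| := abs_add_le _ _
      _ = |∑ γ, g γ| + |∑ γ ∈ Aᶜ, g γ| := by rw [abs_neg]
      _ ≤ _ := add_le_add (total_flip B'') (core Aᶜ B'')
  -- sum identities
  have hid_B : ∑ γ ∈ A, ((∑ k ∈ B, p k γ) - (B.card : ℝ) / n)
      = S - (A.card : ℝ) * (B.card : ℝ) / n := by
    rw [hS_def, Finset.sum_sub_distrib, Finset.sum_const, nsmul_eq_mul]
    ring
  have hcompl : ∀ γ, ∑ k ∈ Bᶜ, p k γ = 1 - ∑ k ∈ B, p k γ := by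
    intro γ
    have h' := Finset.sum_add_sum_compl B (fun k => p k γ)
    rw [h3 γ] at h'
    linarith
  have hBc : ((Bᶜ.card : ℕ) : ℝ) = (n : ℝ) - (B.card : ℝ) := by
    rw [Finset.card_compl, Fintype.card_fin, Nat.cast_sub hBn]
  have hid_Bc : ∑ γ ∈ A, ((∑ k ∈ Bᶜ, p k γ) - ((Bᶜ.card : ℕ) : ℝ) / n)
      = (A.card : ℝ) * (B.card : ℝ) / n - S := by
    have e : ∀ γ ∈ A, (∑ k ∈ Bᶜ, p k γ) - ((Bᶜ.card : ℕ) : ℝ) / n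
        = -((∑ k ∈ B, p k γ) - (B.card : ℝ) / n) := by
      intro γ _
      rw [hcompl γ, hBc]
      field_simp
      ring
    rw [Finset.sum_congr rfl e, Finset.sum_neg_distrib, hid_B]
    ring
  -- key case analysis
  have key : ∃ (A' B'' : Finset (Fin n)), B''.card ≤ A.card ∧ B''.card ≤ B.card ∧
      A'.card ≤ A.card ∧ A'.card ≤ B.card ∧
      |(A.card : ℝ) * (B.card : ℝ) / n - S|
        ≤ (B''.card : ℝ) * ε + Real.sqrt ((A'.card : ℝ) *
            (3 * (B''.card : ℝ) ^ 2 / n * ε + 2 * C * (B''.card : ℝ) / n)) := by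
    have hAc : Aᶜ.card = n - A.card := by rw [Finset.card_compl, Fintype.card_fin]
    have hBcn : Bᶜ.card = n - B.card := by rw [Finset.card_compl, Fintype.card_fin]
    by_cases hbB : 2 * B.card ≤ n
    · -- B'' = B, A' = Aᶜ (since necessarily 2 * A.card > n)
      refine ⟨Aᶜ, B, by omega, le_refl _, by omega, by omega, ?_⟩
      rw [abs_sub_comm, ← hid_B]
      exact bound_via B
    · by_cases haA : 2 * A.card ≤ n
      · -- B'' = Bᶜ, A' = A
        refine ⟨A, Bᶜ, by omega, by omega, le_refl _, by omega, ?_⟩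
        rw [← hid_Bc]
        exact bound_dir Bᶜ
      · -- B'' = Bᶜ, A' = Aᶜ
        refine ⟨Aᶜ, Bᶜ, by omega, by omega, by omega, by omega, ?_⟩
        rw [← hid_Bc]
        exact bound_via Bᶜ
  obtain ⟨A', B'', hmA, hmB, hsA, hsB, hF1⟩ := key
  -- real versions
  have hmX : (B''.card : ℝ) ≤ (A.card : ℝ) := by exact_mod_cast hmA
  have hmY : (B''.card : ℝ) ≤ (B.card : ℝ) := by exact_mod_cast hmB
  have hsX : (A'.card : ℝ) ≤ (A.card : ℝ) := by exact_mod_cast hsA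
  have hsY : (A'.card : ℝ) ≤ (B.card : ℝ) := by exact_mod_cast hsB
  have hm0 : (0:ℝ) ≤ (B''.card : ℝ) := by positivity
  have hs0 : (0:ℝ) ≤ (A'.card : ℝ) := by positivity
  have hsum : (n:ℝ) ≤ (A.card : ℝ) + (B.card : ℝ) := by
    have : n ≤ A.card + B.card := le_of_lt hcard
    exact_mod_cast this
  obtain ⟨g1, g2, g3⟩ := prods (n:ℝ) (A.card : ℝ) (B.card : ℝ) (B''.card : ℝ) (A'.card : ℝ)
    hm0 hs0 hX0 hY0 hnnpos.le hsum hmX hmY hsX hsY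
  rw [hεt2] at hF1
  have lhs_eq : ((A.card : ℝ) / n) * |(B.card : ℝ) / n - (1 / (A.card : ℝ)) * S|
      = |(A.card : ℝ) * (B.card : ℝ) / n - S| / n := by
    have e1 : (A.card : ℝ) * ((B.card : ℝ) / n - 1 / (A.card : ℝ) * S)
        = (A.card : ℝ) * (B.card : ℝ) / n - S := by
      field_simp
    calc ((A.card : ℝ) / n) * |(B.card : ℝ) / n - (1 / (A.card : ℝ)) * S|
        = ((A.card : ℝ) * |(B.card : ℝ) / n - (1 / (A.card : ℝ)) * S|) / n := by ring
      _ = |(A.card : ℝ) * ((B.card : ℝ) / n - (1 / (A.card : ℝ)) * S)| / n := by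
          rw [abs_mul, abs_of_pos hX0]
      _ = |(A.card : ℝ) * (B.card : ℝ) / n - S| / n := by rw [e1]
  calc ((A.card : ℝ) / n) * |(B.card : ℝ) / n - (1 / (A.card : ℝ)) * S|
      = |(A.card : ℝ) * (B.card : ℝ) / n - S| / n := lhs_eq
    _ ≤ (2 * C + Real.sqrt (6 * C) + 3 * Real.sqrt C + 1)
          * ((A.card : ℝ) / n) * ((B.card : ℝ) / n) * t :=
        assemble C (n:ℝ) (A.card : ℝ) (B.card : ℝ) (B''.card : ℝ) (A'.card : ℝ) t _
          hC hnnpos hX0 hY0 hm0 hs0 ht0 ht1 hnt g1 g2 g3 (abs_nonneg _) hF1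
    _ = (2 * C + Real.sqrt (6 * C) + 3 * Real.sqrt C + 1)
          * ((A.card : ℝ) / n) * ((B.card : ℝ) / n)
          * (n : ℝ) ^ (-(1 / 4 : ℝ)) * (Real.log n) ^ ((1 / 2 : ℝ)) := by
        rw [hr1, hr2, ht_def]
        ring
end
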